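/- For a smooth curve A(r) of matrices with A(0) = Id, the third-order coefficient of √(det A(r)) is D₃ = (1/12)[tr A''' - 3⟨A', A''⟩ + 2 tr((A')³) + (3/2)(tr A')(tr A'') - (3/2)(tr A')tr((A')²) + (1/4)(tr A')³], where derivatives are at r = 0 and ⟨A',A''⟩ = tr(A'A''). -/

import Mathlib

/-!
Diagonalising the symmetric matrix `E` gives `det (1 + E) = ∏ (1 + λᵢ)` and `tr (E ^ k) = ∑ λᵢ ^ k`.
Up to fourth order in the eigenvalues, `∏ (1 + λᵢ) = 1 + e₁ + e₂ + e₃`, and Newton's identities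
express `e₁, e₂, e₃` through the traces `tr E, tr E², tr E³`; the eigenvalues are controlled by
`λᵢ² ≤ tr E²`. Applied to the cubic Taylor polynomial `1 + E(r)` of `A(r)` (whose determinant
differs from `det A(r)` by `o(r³)`, the determinant being a polynomial in the entries), this gives
the cubic expansion of `det A(r)`; that of `√(det A(r))` follows from
`√D - s = (D - s²) / (√D + s)`.
-/

open Topology Filter Asymptotics Matrix

namespace Matrix

variable {n : Type*} [Fintype n] [DecidableEq n]

theorem det_conjStarAlgAut {R : Type*} [CommRing R] [StarRing R] (U : unitary (Matrix n n R))
    (M : Matrix n n R) : det (Unitary.conjStarAlgAut R _ U M) = det M := by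
  rw [Unitary.conjStarAlgAut_apply, det_mul, det_mul, mul_right_comm, ← det_mul,
    ← Unitary.coe_star, Unitary.coe_mul_star_self, det_one, one_mul]

theorem trace_conjStarAlgAut {R : Type*} [CommRing R] [StarRing R] (U : unitary (Matrix n n R))
    (M : Matrix n n R) : trace (Unitary.conjStarAlgAut R _ U M) = trace M := by
  rw [Unitary.conjStarAlgAut_apply, trace_mul_cycle, Unitary.coe_star_mul_self, one_mul]

theorem trace_add_smul_sq {R : Type*} [CommRing R] (M N : Matrix n n R) (r : R) :
    trace ((M + r • N) ^ 2) = trace (M ^ 2) + r * (2 * trace (M * N) + r * trace (N ^ 2)) := by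
  simp only [sq, add_mul, mul_add, smul_mul_assoc, mul_smul_comm, trace_add,
    trace_smul, smul_eq_mul, trace_mul_comm N M]
  ring

namespace IsHermitian

variable {𝕜 : Type*} [RCLike 𝕜] {A : Matrix n n 𝕜}

theorem det_one_add (hA : A.IsHermitian) : det (1 + A) = ∏ i, (1 + (hA.eigenvalues i : 𝕜)) := by
  conv_lhs => rw [hA.spectral_theorem, ← map_one (Unitary.conjStarAlgAut 𝕜 _ _), ← map_add,
    det_conjStarAlgAut, ← diagonal_one, diagonal_add, det_diagonal]
  rfl

theorem trace_pow (hA : A.IsHermitian) (k : ℕ) :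
    trace (A ^ k) = ∑ i, (hA.eigenvalues i : 𝕜) ^ k := by
  conv_lhs => rw [hA.spectral_theorem, ← map_pow, trace_conjStarAlgAut, diagonal_pow,
    trace_diagonal]
  rfl

theorem sq_eigenvalues_le_trace_sq {A : Matrix n n ℝ} (hA : A.IsHermitian) (i : n) :
    hA.eigenvalues i ^ 2 ≤ trace (A ^ 2) := by
  simpa [hA.trace_pow] using
    Finset.single_le_sum (fun j _ => sq_nonneg (hA.eigenvalues j)) (Finset.mem_univ i)

end IsHermitian

end Matrix

/-- `1 + e₁ + e₂ + e₃`, with the elementary symmetric functions `eₖ` written through the power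
sums `pₖ` by Newton's identities. -/
noncomputable def newtonCubic (p₁ p₂ p₃ : ℝ) : ℝ :=
  1 + p₁ + (p₁ ^ 2 - p₂) / 2 + (p₁ ^ 3 - 3 * p₁ * p₂ + 2 * p₃) / 6

section Asymptotics

variable {α : Type*} {l : Filter α} {u : α → ℝ}

theorem isBigO_sum_pow {ι : Type*} (s : Finset ι) {x : ι → α → ℝ} (hx : ∀ i ∈ s, x i =O[l] u)
    (k : ℕ) : (fun a => ∑ i ∈ s, x i a ^ k) =O[l] fun a => u a ^ k := by
  simpa only [Finset.sum_fn] using IsBigO.sum fun i hi => (hx i hi).pow k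

theorem isBigO_prod_one_add_sub_newtonCubic {ι : Type*} (hu : u =O[l] fun _ => (1 : ℝ))
    (s : Finset ι) {x : ι → α → ℝ} (hx : ∀ i ∈ s, x i =O[l] u) :
    (fun a => ∏ i ∈ s, (1 + x i a) -
      newtonCubic (∑ i ∈ s, x i a) (∑ i ∈ s, x i a ^ 2) (∑ i ∈ s, x i a ^ 3))
      =O[l] fun a => u a ^ 4 := by
  classical
  induction s using Finset.induction_on with
  | empty => simp [newtonCubic, isBigO_zero]
  | insert j s hj ih =>
    have hxs : ∀ i ∈ s, x i =O[l] u := fun i hi => hx i (Finset.mem_insert_of_mem hi)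
    have hxj : x j =O[l] u := hx j (Finset.mem_insert_self j s)
    have hp := isBigO_sum_pow s hxs
    have hp₁ : (fun a => ∑ i ∈ s, x i a) =O[l] u := by simpa using hp 1
    have hp₁₂ : (fun a => (∑ i ∈ s, x i a) * ∑ i ∈ s, x i a ^ 2) =O[l] fun a => u a ^ 3 :=
      (hp₁.mul (hp 2)).congr_right fun a => by ring
    have he₃ : (fun a => ((∑ i ∈ s, x i a) ^ 3 - 3 * (∑ i ∈ s, x i a) * (∑ i ∈ s, x i a ^ 2)
        + 2 * ∑ i ∈ s, x i a ^ 3) / 6) =O[l] fun a => u a ^ 3 :=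
      (((hp₁.pow 3).sub (hp₁₂.const_mul_left 3)).add ((hp 3).const_mul_left 2)).const_mul_left
        (1 / 6) |>.congr_left fun a => by ring
    -- multiplying `newtonCubic` of `s` by `1 + x j` gives that of `insert j s` plus `x j * e₃`
    have key : (fun a => (1 + x j a) * (∏ i ∈ s, (1 + x i a) -
        newtonCubic (∑ i ∈ s, x i a) (∑ i ∈ s, x i a ^ 2) (∑ i ∈ s, x i a ^ 3)) +
        x j a * (((∑ i ∈ s, x i a) ^ 3 - 3 * (∑ i ∈ s, x i a) * (∑ i ∈ s, x i a ^ 2)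
        + 2 * ∑ i ∈ s, x i a ^ 3) / 6)) =O[l] fun a => u a ^ 4 :=
      ((((isBigO_const_one ℝ (1 : ℝ) l).add (hxj.trans hu)).mul (ih hxs)).congr_right
        fun a => by simp).add ((hxj.mul he₃).congr_right fun a => by ring)
    refine key.congr_left fun a => ?_
    simp only [Finset.prod_insert hj, Finset.sum_insert hj, newtonCubic]
    ring

theorem isBigO_det_one_add_sub_newtonCubic {n : Type*} [Fintype n] [DecidableEq n]
    {E : α → Matrix n n ℝ} (hE : ∀ a, (E a).IsHermitian) (hu : u =O[l] fun _ => (1 : ℝ))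
    (hE₂ : (fun a => trace (E a ^ 2)) =O[l] fun a => u a ^ 2) :
    (fun a => det (1 + E a) - newtonCubic (trace (E a)) (trace (E a ^ 2)) (trace (E a ^ 3)))
      =O[l] fun a => u a ^ 4 := by
  have heig : ∀ i, (fun a => (hE a).eigenvalues i) =O[l] u := fun i =>
    IsBigO.of_pow two_ne_zero <| (IsBigO.of_bound 1 <| Eventually.of_forall fun a => by
      simpa using ((hE a).sq_eigenvalues_le_trace_sq i).trans (le_abs_self _)).trans hE₂
  refine (isBigO_prod_one_add_sub_newtonCubic hu Finset.univ fun i _ => heig i).congr_left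
    fun a => ?_
  simp [(hE a).det_one_add, (hE a).trace_pow, (hE a).trace_eq_sum_eigenvalues]

theorem isLittleO_prod_sub_prod {ι R : Type*} [NormedCommRing R] {v : α → ℝ} (s : Finset ι)
    {f g : ι → α → R} (hf : ∀ i ∈ s, f i =O[l] fun _ => (1 : ℝ))
    (hg : ∀ i ∈ s, g i =O[l] fun _ => (1 : ℝ))
    (hfg : ∀ i ∈ s, (fun a => f i a - g i a) =o[l] v) :
    (fun a => ∏ i ∈ s, f i a - ∏ i ∈ s, g i a) =o[l] v := by
  classical
  induction s using Finset.induction_on with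
  | empty => simp
  | insert j s hj ih =>
    have hfs : (fun a => ∏ i ∈ s, f i a) =O[l] fun _ => (1 : ℝ) := by
      simpa using IsBigO.finsetProd (g := fun _ _ => (1 : ℝ))
        fun i hi => hf i (Finset.mem_insert_of_mem hi)
    have ihs := ih (fun i hi => hf i (Finset.mem_insert_of_mem hi))
      (fun i hi => hg i (Finset.mem_insert_of_mem hi))
      (fun i hi => hfg i (Finset.mem_insert_of_mem hi))
    have h₁ : (fun a => (f j a - g j a) * ∏ i ∈ s, f i a) =o[l] v := by
      simpa using (hfg j (Finset.mem_insert_self j s)).mul_isBigO hfs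
    have h₂ : (fun a => g j a * (∏ i ∈ s, f i a - ∏ i ∈ s, g i a)) =o[l] v := by
      simpa using (hg j (Finset.mem_insert_self j s)).mul_isLittleO ihs
    refine (h₁.add h₂).congr_left fun a => ?_
    simp only [Finset.prod_insert hj]
    ring

theorem isLittleO_det_sub_det {n R : Type*} [Fintype n] [DecidableEq n] [NormedCommRing R]
    {v : α → ℝ} (hv : v =O[l] fun _ => (1 : ℝ)) {M N : α → Matrix n n R}
    (hN : ∀ i j, (fun a => N a i j) =O[l] fun _ => (1 : ℝ))
    (hMN : ∀ i j, (fun a => M a i j - N a i j) =o[l] v) :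
    (fun a => det (M a) - det (N a)) =o[l] v := by
  have hM : ∀ i j, (fun a => M a i j) =O[l] fun _ => (1 : ℝ) := fun i j =>
    (((hMN i j).isBigO.trans hv).add (hN i j)).congr_left fun a => by ring
  refine (IsLittleO.fun_sum (s := Finset.univ) fun σ _ =>
    (isLittleO_prod_sub_prod Finset.univ (fun i _ => hM (σ i) i) (fun i _ => hN (σ i) i)
      (fun i _ => hMN (σ i) i)).const_mul_left (Equiv.Perm.sign σ : R)).congr_left fun a => ?_
  simp only [det_apply', ← Finset.sum_sub_distrib, mul_sub]

end Asymptotics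

def HasCubicExpansion (f : ℝ → ℝ) (c₀ c₁ c₂ c₃ : ℝ) : Prop :=
  (fun r => f r - (c₀ + c₁ * r + c₂ * r ^ 2 + c₃ * r ^ 3)) =o[𝓝[≠] 0] fun r => r ^ 3

theorem isLittleO_pow_three_of_isBigO_pow_four {f : ℝ → ℝ}
    (h : f =O[𝓝[≠] 0] fun r => r ^ 4) : f =o[𝓝[≠] 0] fun r => r ^ 3 :=
  h.trans_isLittleO <| (isLittleO_pow_pow (by norm_num)).mono nhdsWithin_le_nhds

theorem Continuous.isBigO_one_nhdsNE {f : ℝ → ℝ} (hf : Continuous f) :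
    f =O[𝓝[≠] 0] fun _ => (1 : ℝ) :=
  hf.continuousAt.isBigO.mono nhdsWithin_le_nhds

theorem hasCubicExpansion_poly (c₀ c₁ c₂ c₃ : ℝ) :
    HasCubicExpansion (fun r => c₀ + c₁ * r + c₂ * r ^ 2 + c₃ * r ^ 3) c₀ c₁ c₂ c₃ := by
  simp [HasCubicExpansion]

namespace HasCubicExpansion

variable {f g : ℝ → ℝ} {c₀ c₁ c₂ c₃ d₀ d₁ d₂ d₃ : ℝ}

theorem of_eq_add_mul_pow_three {q : ℝ → ℝ}
    (hf : ∀ r, f r = c₀ + c₁ * r + c₂ * r ^ 2 + q r * r ^ 3) (hq : Tendsto q (𝓝[≠] 0) (𝓝 c₃)) :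
    HasCubicExpansion f c₀ c₁ c₂ c₃ := by
  have : (fun r => q r - c₃) =o[𝓝[≠] 0] fun _ => (1 : ℝ) :=
    (isLittleO_one_iff ℝ).2 (by simpa using hq.sub_const c₃)
  refine (this.mul_isBigO (isBigO_refl (fun r : ℝ => r ^ 3) _)).congr (fun r => ?_) fun r => ?_
  · rw [hf]; ring
  · simp

theorem of_isLittleO_sub (hf : HasCubicExpansion f c₀ c₁ c₂ c₃)
    (h : (fun r => g r - f r) =o[𝓝[≠] 0] fun r => r ^ 3) : HasCubicExpansion g c₀ c₁ c₂ c₃ :=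
  (h.add hf).congr_left fun r => by ring

theorem isLittleO_sub (hf : HasCubicExpansion f c₀ c₁ c₂ c₃)
    (hg : HasCubicExpansion g c₀ c₁ c₂ c₃) : (fun r => f r - g r) =o[𝓝[≠] 0] fun r => r ^ 3 :=
  (IsLittleO.sub hf hg).congr_left fun r => by ring

theorem isBigO_one (hf : HasCubicExpansion f c₀ c₁ c₂ c₃) : f =O[𝓝[≠] 0] fun _ => (1 : ℝ) := by
  have hr : Continuous fun r : ℝ => r ^ 3 := by fun_prop
  have hP : Continuous fun r : ℝ => c₀ + c₁ * r + c₂ * r ^ 2 + c₃ * r ^ 3 := by fun_prop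
  exact ((hf.isBigO.trans hr.isBigO_one_nhdsNE).add hP.isBigO_one_nhdsNE).congr_left
    fun r => by ring

theorem add (hf : HasCubicExpansion f c₀ c₁ c₂ c₃) (hg : HasCubicExpansion g d₀ d₁ d₂ d₃) :
    HasCubicExpansion (fun r => f r + g r) (c₀ + d₀) (c₁ + d₁) (c₂ + d₂) (c₃ + d₃) :=
  (IsLittleO.add hf hg).congr_left fun r => by ring

theorem sub (hf : HasCubicExpansion f c₀ c₁ c₂ c₃) (hg : HasCubicExpansion g d₀ d₁ d₂ d₃) :
    HasCubicExpansion (fun r => f r - g r) (c₀ - d₀) (c₁ - d₁) (c₂ - d₂) (c₃ - d₃) :=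
  (IsLittleO.sub hf hg).congr_left fun r => by ring

theorem const_mul (hf : HasCubicExpansion f c₀ c₁ c₂ c₃) (a : ℝ) :
    HasCubicExpansion (fun r => a * f r) (a * c₀) (a * c₁) (a * c₂) (a * c₃) :=
  (IsLittleO.const_mul_left hf a).congr_left fun r => by ring

theorem mul (hf : HasCubicExpansion f c₀ c₁ c₂ c₃) (hg : HasCubicExpansion g d₀ d₁ d₂ d₃) :
    HasCubicExpansion (fun r => f r * g r) (c₀ * d₀) (c₀ * d₁ + c₁ * d₀)
      (c₀ * d₂ + c₁ * d₁ + c₂ * d₀) (c₀ * d₃ + c₁ * d₂ + c₂ * d₁ + c₃ * d₀) := by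
  have hP : (fun r : ℝ => c₀ + c₁ * r + c₂ * r ^ 2 + c₃ * r ^ 3) =O[𝓝[≠] 0]
      fun _ => (1 : ℝ) := by
    apply Continuous.isBigO_one_nhdsNE; fun_prop
  -- the product of the two cubic polynomials exceeds its truncation by `r ^ 4 * q r`
  have hq : (fun r : ℝ => c₁ * d₃ + c₂ * d₂ + c₃ * d₁ + (c₂ * d₃ + c₃ * d₂) * r + c₃ * d₃ * r ^ 2)
      =O[𝓝[≠] 0] fun _ => (1 : ℝ) := by
    apply Continuous.isBigO_one_nhdsNE; fun_prop
  have h₁ := (hf.mul_isBigO hg.isBigO_one).congr_right fun r => mul_one _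
  have h₂ := (hP.mul_isLittleO hg).congr_right fun r => one_mul _
  have h₃ := isLittleO_pow_three_of_isBigO_pow_four <|
    ((isBigO_refl (fun r : ℝ => r ^ 4) _).mul hq).congr_right fun r => mul_one _
  refine ((h₁.add h₂).add h₃).congr_left fun r => ?_
  ring

theorem newtonCubic {p₁ p₂ p₃ : ℝ → ℝ} {x₁ x₂ x₃ y₂ y₃ z₃ : ℝ}
    (h₁ : HasCubicExpansion p₁ 0 x₁ x₂ x₃) (h₂ : HasCubicExpansion p₂ 0 0 y₂ y₃)
    (h₃ : HasCubicExpansion p₃ 0 0 0 z₃) :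
    HasCubicExpansion (fun r => _root_.newtonCubic (p₁ r) (p₂ r) (p₃ r)) 1 x₁
      (x₂ + (x₁ ^ 2 - y₂) / 2) (x₃ + x₁ * x₂ - y₃ / 2 + (x₁ ^ 3 - 3 * x₁ * y₂ + 2 * z₃) / 6) := by
  have := (((hasCubicExpansion_poly 1 0 0 0).add h₁).add
    (((h₁.mul h₁).sub h₂).const_mul (1 / 2))).add
    (((((h₁.mul h₁).mul h₁).sub ((h₁.mul h₂).const_mul 3)).add (h₃.const_mul 2)).const_mul (1 / 6))
  convert this using 1
  · funext r
    rw [_root_.newtonCubic]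
    ring
  all_goals ring

theorem sqrt {D : ℝ → ℝ} {α β γ : ℝ}
    (h : HasCubicExpansion D 1 (2 * α) (α ^ 2 + 2 * β) (2 * γ + 2 * α * β))
    (hD : ∀ᶠ r in 𝓝[≠] 0, 0 ≤ D r) : HasCubicExpansion (fun r => √(D r)) 1 α β γ := by
  set s : ℝ → ℝ := fun r => 1 + α * r + β * r ^ 2 + γ * r ^ 3 with hs_def
  have hs : HasCubicExpansion s 1 α β γ := hasCubicExpansion_poly 1 α β γ
  have hss : HasCubicExpansion (fun r => s r * s r) 1 (2 * α) (α ^ 2 + 2 * β)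
      (2 * γ + 2 * α * β) := by
    convert hs.mul hs using 1 <;> ring
  have hs_half : ∀ᶠ r in 𝓝[≠] 0, 1 / 2 ≤ s r := by
    have : Tendsto s (𝓝[≠] 0) (𝓝 1) := by
      simpa [hs_def] using ((by fun_prop : Continuous s).tendsto 0).mono_left nhdsWithin_le_nhds
    exact this.eventually_const_le (by norm_num)
  have hinv : (fun r => (√(D r) + s r)⁻¹) =O[𝓝[≠] 0] fun _ => (1 : ℝ) := by
    refine IsBigO.of_bound 2 ?_
    filter_upwards [hs_half] with r hr
    have hpos : 1 / 2 ≤ √(D r) + s r := by linarith [Real.sqrt_nonneg (D r)]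
    rw [norm_inv, Real.norm_of_nonneg (by linarith), norm_one, mul_one]
    exact inv_le_of_inv_le₀ (by norm_num) (by linarith)
  refine hs.of_isLittleO_sub <| ((h.isLittleO_sub hss).mul_isBigO hinv).congr' ?_
    (Eventually.of_forall fun r => mul_one _)
  filter_upwards [hs_half, hD] with r hr hDr
  have : √(D r) + s r ≠ 0 := by linarith [Real.sqrt_nonneg (D r)]
  field_simp
  linear_combination -Real.sq_sqrt hDr

end HasCubicExpansion

section CubicTaylor

variable {n : Type*} (A₁ A₂ A₃ : Matrix n n ℝ)

noncomputable def cubicTaylor (r : ℝ) : Matrix n n ℝ := r • A₁ + (r ^ 2 / 2) • A₂ + (r ^ 3 / 6) • A₃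

theorem cubicTaylor_eq_smul (r : ℝ) :
    cubicTaylor A₁ A₂ A₃ r = r • (A₁ + r • ((1 / 2 : ℝ) • A₂ + (r / 6) • A₃)) := by
  rw [cubicTaylor]
  module

variable [Fintype n]

theorem hasCubicExpansion_trace_cubicTaylor :
    HasCubicExpansion (fun r => trace (cubicTaylor A₁ A₂ A₃ r)) 0 A₁.trace (A₂.trace / 2)
      (A₃.trace / 6) :=
  .of_eq_add_mul_pow_three (fun r => by simp [cubicTaylor, trace_add, trace_smul]; ring)
    tendsto_const_nhds

variable [DecidableEq n]

theorem hasCubicExpansion_trace_cubicTaylor_sq :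
    HasCubicExpansion (fun r => trace (cubicTaylor A₁ A₂ A₃ r ^ 2)) 0 0 (A₁ * A₁).trace
      (A₁ * A₂).trace := by
  set B : ℝ → Matrix n n ℝ := fun r => (1 / 2 : ℝ) • A₂ + (r / 6) • A₃
  refine .of_eq_add_mul_pow_three (q := fun r => 2 * trace (A₁ * B r) + r * trace (B r ^ 2))
    (fun r => ?_) ?_
  · simp only [B, cubicTaylor_eq_smul, smul_pow, trace_smul, smul_eq_mul, trace_add_smul_sq,
      sq A₁]
    ring
  · exact (by fun_prop : Continuous fun r => 2 * trace (A₁ * B r) + r * trace (B r ^ 2)).tendsto'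
      0 _ (by simp [B, trace_smul]) |>.mono_left nhdsWithin_le_nhds

theorem hasCubicExpansion_trace_cubicTaylor_cube :
    HasCubicExpansion (fun r => trace (cubicTaylor A₁ A₂ A₃ r ^ 3)) 0 0 0
      (A₁ * A₁ * A₁).trace := by
  refine .of_eq_add_mul_pow_three
    (q := fun r => trace ((A₁ + r • ((1 / 2 : ℝ) • A₂ + (r / 6) • A₃)) ^ 3)) (fun r => ?_) ?_
  · simp only [cubicTaylor_eq_smul, smul_pow, trace_smul, smul_eq_mul]
    ring
  · exact (by fun_prop : Continuous _).tendsto' 0 _ (by simp [pow_three, mul_assoc])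
      |>.mono_left nhdsWithin_le_nhds

theorem isBigO_trace_cubicTaylor_sq :
    (fun r => trace (cubicTaylor A₁ A₂ A₃ r ^ 2)) =O[𝓝[≠] 0] fun r => r ^ 2 := by
  have hq : Continuous fun r : ℝ => trace ((A₁ + r • ((1 / 2 : ℝ) • A₂ + (r / 6) • A₃)) ^ 2) := by
    fun_prop
  exact ((isBigO_refl (fun r : ℝ => r ^ 2) _).mul hq.isBigO_one_nhdsNE).congr
    (fun r => by simp only [cubicTaylor_eq_smul, smul_pow, trace_smul, smul_eq_mul])
    fun r => mul_one _

theorem hasCubicExpansion_det_one_add_cubicTaylor (h₁ : A₁.IsSymm)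
    (h₂ : A₂.IsSymm) (h₃ : A₃.IsSymm) :
    HasCubicExpansion (fun r => det (1 + cubicTaylor A₁ A₂ A₃ r)) 1 A₁.trace
      (A₂.trace / 2 + (A₁.trace ^ 2 - (A₁ * A₁).trace) / 2)
      (A₃.trace / 6 + A₁.trace * (A₂.trace / 2) - (A₁ * A₂).trace / 2 +
        (A₁.trace ^ 3 - 3 * A₁.trace * (A₁ * A₁).trace + 2 * (A₁ * A₁ * A₁).trace) / 6) := by
  have hE : ∀ r, (cubicTaylor A₁ A₂ A₃ r).IsHermitian := fun r =>
    isHermitian_iff_isSymm.2 <| ((h₁.smul r).add (h₂.smul _)).add (h₃.smul _)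
  refine ((hasCubicExpansion_trace_cubicTaylor A₁ A₂ A₃).newtonCubic
    (hasCubicExpansion_trace_cubicTaylor_sq A₁ A₂ A₃)
    (hasCubicExpansion_trace_cubicTaylor_cube A₁ A₂ A₃)).of_isLittleO_sub ?_
  exact isLittleO_pow_three_of_isBigO_pow_four <| isBigO_det_one_add_sub_newtonCubic hE
    (u := fun r => r) continuous_id.isBigO_one_nhdsNE (isBigO_trace_cubicTaylor_sq A₁ A₂ A₃)

end CubicTaylor

theorem stmt6_general {d : ℕ} (A : ℝ → Matrix (Fin d) (Fin d) ℝ)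
    (A1 A2 A3 : Matrix (Fin d) (Fin d) ℝ)
    (hpos : ∀ r, (A r).PosDef)
    (hs1 : A1.IsSymm) (hs2 : A2.IsSymm) (hs3 : A3.IsSymm)
    (hexp : ∀ i j, Filter.Tendsto
      (fun r : ℝ => ((A r - ((1 : Matrix (Fin d) (Fin d) ℝ) + r • A1 + (r^2/2) • A2
          + (r^3/6) • A3)) i j) / r^3)
      (𝓝[≠] (0:ℝ)) (𝓝 0)) :
    Filter.Tendsto
      (fun r : ℝ => (Real.sqrt (A r).det -
        (1 + (A1.trace / 2) * r +
          ((A2.trace - (A1 * A1).trace + (A1.trace)^2 / 2) / 4) * r^2 +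
          ((A3.trace - 3 * (A1 * A2).trace + 2 * (A1 * A1 * A1).trace
            + (3/2) * A1.trace * A2.trace - (3/2) * A1.trace * (A1 * A1).trace
            + (1/4) * (A1.trace)^3) / 12) * r^3)) / r^3)
      (𝓝[≠] (0:ℝ)) (𝓝 0) := by
  have hR : ∀ i j, (fun r => A r i j - (1 + cubicTaylor A1 A2 A3 r) i j) =o[𝓝[≠] 0]
      fun r => r ^ 3 := fun i j => by
    refine (isLittleO_iff_tendsto' ?_).2
      (by simpa only [cubicTaylor, add_assoc, Matrix.sub_apply] using hexp i j)
    filter_upwards [self_mem_nhdsWithin] with r hr h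
    exact absurd (pow_eq_zero_iff three_ne_zero |>.1 h) hr
  have hdetA := (hasCubicExpansion_det_one_add_cubicTaylor A1 A2 A3 hs1 hs2 hs3).of_isLittleO_sub <|
    isLittleO_det_sub_det (by fun_prop : Continuous fun r : ℝ => r ^ 3).isBigO_one_nhdsNE
      (fun i j => Continuous.isBigO_one_nhdsNE <| by unfold cubicTaylor; fun_prop) hR
  have hsqrt : HasCubicExpansion (fun r => √(A r).det) 1 (A1.trace / 2)
      ((A2.trace - (A1 * A1).trace + A1.trace ^ 2 / 2) / 4)
      ((A3.trace - 3 * (A1 * A2).trace + 2 * (A1 * A1 * A1).trace + 3 / 2 * A1.trace * A2.trace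
        - 3 / 2 * A1.trace * (A1 * A1).trace + 1 / 4 * A1.trace ^ 3) / 12) :=
    .sqrt (by convert hdetA using 1 <;> ring) (.of_forall fun r => (hpos r).det_pos.le)
  exact hsqrt.tendsto_div_nhds_zero

/-- For a curve of symmetric positive-definite matrices
`A r = Id + r A' + (r²/2) A'' + (r³/6) A''' + o(r³)`, the third-order coefficient of
`√(det A r)` is `D₃ = (1/12)[tr A''' - 3⟨A',A''⟩ + 2 tr((A')³) + (3/2)(tr A')(tr A'')
- (3/2)(tr A') tr((A')²) + (1/4)(tr A')³]`. -/
theorem stmt6 {d : ℕ} (A : ℝ → Matrix (Fin d) (Fin d) ℝ)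
    (A1 A2 A3 : Matrix (Fin d) (Fin d) ℝ)
    (hs : ∀ r, (A r).IsSymm) (hpos : ∀ r, (A r).PosDef)
    (hs1 : A1.IsSymm) (hs2 : A2.IsSymm) (hs3 : A3.IsSymm)
    (hexp : ∀ i j, Filter.Tendsto
      (fun r : ℝ => ((A r - ((1 : Matrix (Fin d) (Fin d) ℝ) + r • A1 + (r^2/2) • A2
          + (r^3/6) • A3)) i j) / r^3)
      (𝓝[≠] (0:ℝ)) (𝓝 0)) :
    Filter.Tendsto
      (fun r : ℝ => (Real.sqrt (A r).det -
        (1 + (A1.trace / 2) * r +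
          ((A2.trace - (A1 * A1).trace + (A1.trace)^2 / 2) / 4) * r^2 +
          ((A3.trace - 3 * (A1 * A2).trace + 2 * (A1 * A1 * A1).trace
            + (3/2) * A1.trace * A2.trace - (3/2) * A1.trace * (A1 * A1).trace
            + (1/4) * (A1.trace)^3) / 12) * r^3)) / r^3)
      (𝓝[≠] (0:ℝ)) (𝓝 0) :=
  stmt6_general A A1 A2 A3 hpos hs1 hs2 hs3 hexp
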